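/- arXiv:2407.02619 — 2 statements merged into one kernel-verified Lean document; each statement's English description precedes it below -/
import Mathlib

section
/- The map a ↦ sgn(a)·|a|_K from an ordered field K with compatible non-Archimedean absolute value |·|_K to the real tropical hyperfield ℝ𝕋 is a hyperfield homomorphism; in particular for all a, b ∈ K, sgn(a+b)·|a+b|_K lies in the hyperaddition sgn(a)|a|_K ⊕ sgn(b)|b|_K of ℝ𝕋. -/
noncomputable section

/-- The sign of an element of a linear ordered field, as a real number. -/
def sgn {K : Type*} [Field K] [LinearOrder K] [IsStrictOrderedRing K] (x : K) : ℝ :=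
  if 0 < x then 1 else if x < 0 then -1 else 0

/-- Hyperaddition in the real tropical hyperfield `ℝ𝕋`. -/
def rtAdd (a b : ℝ) : Set ℝ :=
  if |b| < |a| then {a}
  else if |a| < |b| then {b}
  else if a = b then {a}
  else Set.Icc (min a b) (max a b)

/-- `av` is a non-Archimedean absolute value. -/
def IsNonarch {K : Type*} [Field K] [LinearOrder K] [IsStrictOrderedRing K] (av : AbsoluteValue K ℝ) : Prop :=
  ∀ x y : K, av (x + y) ≤ max (av x) (av y)

/-- `av` is compatible with the order on `K`: `0 ≤ a ≤ b` implies `av a ≤ av b`. -/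
def Compat {K : Type*} [Field K] [LinearOrder K] [IsStrictOrderedRing K] (av : AbsoluteValue K ℝ) : Prop :=
  ∀ x y : K, 0 ≤ x → x ≤ y → av x ≤ av y

/-!
Write `⟨a⟩ = sgn a · |a|`. Multiplicativity is that of `sgn` and `|·|`. For the sum, if `|b| < |a|`
the ultrametric inequality gives `|a + b| = |a|`, and compatibility with the order forbids `b` from
flipping the sign of `a`, so `⟨a + b⟩ = ⟨a⟩`, the only element of `⟨a⟩ ⊕ ⟨b⟩`. If `|a| = |b|` and
`a`, `b` have the same sign, compatibility gives `|a + b| = |a|` and again `⟨a + b⟩ = ⟨a⟩ = ⟨b⟩`;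
if the signs are opposite, `⟨a⟩ ⊕ ⟨b⟩` is the whole interval `[-|a|, |a|]`, which contains
`⟨a + b⟩` because `|a + b| ≤ |a|`.
-/

section RealTropical

lemma rtAdd_comm (a b : ℝ) : rtAdd a b = rtAdd b a := by
  rcases eq_or_ne a b with rfl | hab
  · rfl
  rw [rtAdd, rtAdd, if_neg hab, if_neg hab.symm, min_comm, max_comm]
  split_ifs <;> first | rfl | linarith

lemma rtAdd_self (a : ℝ) : rtAdd a a = {a} := by
  simp [rtAdd]

lemma rtAdd_of_abs_lt {a b : ℝ} (h : |b| < |a|) : rtAdd a b = {a} :=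
  if_pos h

lemma mem_rtAdd_neg_of_abs_le {x c : ℝ} (h : |x| ≤ |c|) : x ∈ rtAdd c (-c) := by
  rcases eq_or_ne c 0 with rfl | hc
  · simpa [rtAdd_self] using h
  have hne : c ≠ -c := fun h' => hc (by linarith)
  rw [rtAdd, abs_neg, if_neg (lt_irrefl _), if_neg (lt_irrefl _), if_neg hne, Set.mem_Icc,
    min_le_iff, le_max_iff]
  obtain ⟨hl, hr⟩ := abs_le.1 h
  cases abs_cases c <;> constructor <;> first | left; linarith | right; linarith

end RealTropical

section SignedAbs

variable {K : Type*} [Field K] [LinearOrder K] [IsStrictOrderedRing K]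

lemma sgn_eq_sign (x : K) : sgn x = (SignType.sign x : ℝ) := by
  rw [sgn, sign_apply]
  split_ifs <;> simp

lemma sgn_mul (x y : K) : sgn (x * y) = sgn x * sgn y := by
  simp only [sgn_eq_sign, sign_mul, SignType.coe_mul]

lemma sgn_of_pos {x : K} (h : 0 < x) : sgn x = 1 := by
  simp [sgn, h]

lemma sgn_of_neg {x : K} (h : x < 0) : sgn x = -1 := by
  simp [sgn, h, h.not_gt]

def signedAbs (av : AbsoluteValue K ℝ) (x : K) : ℝ :=
  sgn x * av x

variable (av : AbsoluteValue K ℝ)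

lemma abs_signedAbs (x : K) : |signedAbs av x| = av x := by
  rcases lt_trichotomy x 0 with h | rfl | h
  · simp [signedAbs, sgn_of_neg h]
  · simp [signedAbs]
  · simp [signedAbs, sgn_of_pos h]

lemma signedAbs_mul (x y : K) : signedAbs av (x * y) = signedAbs av x * signedAbs av y := by
  simp only [signedAbs, sgn_mul, map_mul]
  ring

lemma signedAbs_of_pos {x : K} (h : 0 < x) : signedAbs av x = av x := by
  simp [signedAbs, sgn_of_pos h]

lemma signedAbs_of_neg {x : K} (h : x < 0) : signedAbs av x = -av x := by
  simp [signedAbs, sgn_of_neg h]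

variable {av}

lemma add_pos_of_map_lt (hcomp : Compat av) {a b : K} (ha : 0 < a) (h : av b < av a) :
    0 < a + b := by
  by_contra! hab
  have := hcomp a (-b) ha.le (by linarith)
  rw [map_neg_eq_map] at this
  exact this.not_gt h

lemma sgn_add_of_map_lt (hcomp : Compat av) {a b : K} (h : av b < av a) : sgn (a + b) = sgn a := by
  have ha : a ≠ 0 := by
    rintro rfl
    exact (av.nonneg b).not_gt (by simpa using h)
  rcases ha.lt_or_gt with ha | ha
  · have h' : av (-b) < av (-a) := by simpa only [map_neg_eq_map] using h
    have := add_pos_of_map_lt hcomp (neg_pos.2 ha) h'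
    rw [sgn_of_neg ha, sgn_of_neg (by linarith)]
  · rw [sgn_of_pos ha, sgn_of_pos (add_pos_of_map_lt hcomp ha h)]

lemma signedAbs_add_of_map_lt (hna : IsNonarch av) (hcomp : Compat av) {a b : K}
    (h : av b < av a) : signedAbs av (a + b) = signedAbs av a := by
  rw [signedAbs, signedAbs, sgn_add_of_map_lt hcomp h, IsNonarchimedean.add_eq_left_of_lt hna h]

lemma map_add_eq_max_of_nonneg (hna : IsNonarch av) (hcomp : Compat av) {a b : K} (ha : 0 ≤ a)
    (hb : 0 ≤ b) : av (a + b) = max (av a) (av b) :=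
  (hna a b).antisymm <| max_le (hcomp a (a + b) ha (le_add_of_nonneg_right hb))
    (hcomp b (a + b) hb (le_add_of_nonneg_left ha))

lemma signedAbs_add_mem_rtAdd_of_map_lt (hna : IsNonarch av) (hcomp : Compat av) {a b : K}
    (h : av b < av a) : signedAbs av (a + b) ∈ rtAdd (signedAbs av a) (signedAbs av b) := by
  rw [rtAdd_of_abs_lt (by rwa [abs_signedAbs, abs_signedAbs]), signedAbs_add_of_map_lt hna hcomp h]
  rfl

lemma signedAbs_add_mem_rtAdd_of_map_eq (hna : IsNonarch av) (hcomp : Compat av) {a b : K}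
    (h : av a = av b) : signedAbs av (a + b) ∈ rtAdd (signedAbs av a) (signedAbs av b) := by
  rcases eq_or_ne a 0 with rfl | ha
  · obtain rfl : b = 0 := av.eq_zero.1 (by rw [← h, map_zero])
    simp [signedAbs, rtAdd_self]
  have hb : b ≠ 0 := fun hb => ha (av.eq_zero.1 (by rw [h, hb, map_zero]))
  have hle : |signedAbs av (a + b)| ≤ |av a| := by
    rw [abs_signedAbs, abs_of_nonneg (av.nonneg a)]
    exact (hna a b).trans (by rw [h, max_self])
  rcases ha.lt_or_gt with ha | ha <;> rcases hb.lt_or_gt with hb | hb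
  · have hsum : av (a + b) = av a := by
      rw [← map_neg_eq_map, neg_add,
        map_add_eq_max_of_nonneg hna hcomp (neg_nonneg.2 ha.le) (neg_nonneg.2 hb.le),
        map_neg_eq_map, map_neg_eq_map, ← h, max_self]
    rw [signedAbs_of_neg av (add_neg ha hb), signedAbs_of_neg av ha, signedAbs_of_neg av hb, hsum,
      h, rtAdd_self]
    rfl
  · rw [signedAbs_of_neg av ha, signedAbs_of_pos av hb, ← h, rtAdd_comm]
    exact mem_rtAdd_neg_of_abs_le hle
  · rw [signedAbs_of_pos av ha, signedAbs_of_neg av hb, ← h]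
    exact mem_rtAdd_neg_of_abs_le hle
  · rw [signedAbs_of_pos av (add_pos ha hb), signedAbs_of_pos av ha, signedAbs_of_pos av hb,
      map_add_eq_max_of_nonneg hna hcomp ha.le hb.le, h, max_self, rtAdd_self]
    rfl

end SignedAbs

/-- The signed absolute value `a ↦ sgn(a)·|a|` is a hyperfield homomorphism
from an ordered field with compatible non-Archimedean absolute value to `ℝ𝕋`. -/
theorem signedAbs_hyperfield_hom {K : Type*} [Field K] [LinearOrder K] [IsStrictOrderedRing K]
    (av : AbsoluteValue K ℝ) (hna : IsNonarch av) (hcomp : Compat av) :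
    sgn (0 : K) * av 0 = 0 ∧
    sgn (1 : K) * av 1 = 1 ∧
    (∀ a b : K, sgn (a * b) * av (a * b) = (sgn a * av a) * (sgn b * av b)) ∧
    (∀ a b : K, sgn (a + b) * av (a + b) ∈ rtAdd (sgn a * av a) (sgn b * av b)) := by
  refine ⟨by simp, by simp [sgn_of_pos], signedAbs_mul av, fun a b => ?_⟩
  rcases lt_trichotomy (av b) (av a) with h | h | h
  · exact signedAbs_add_mem_rtAdd_of_map_lt hna hcomp h
  · exact signedAbs_add_mem_rtAdd_of_map_eq hna hcomp h.symm
  · rw [add_comm, rtAdd_comm]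
    exact signedAbs_add_mem_rtAdd_of_map_lt hna hcomp h
end
end

section
/- The covector poset of the universal realizable oriented matroid M_univ on E = (ℝ^{n+1})^* satisfies covector elimination: for all covectors X, Y and e ∈ S(X,Y) (the separation set where X(e) = −Y(e) ≠ 0), there exists a covector Z with Z(e) = 0 and Z(e') = (X∘Y)(e') for all e' ∉ S(X,Y). -/
noncomputable section

variable {E : Type*} [DecidableEq E] {n : ℕ}

/-- A chirotope of rank `n+1` on the ground set `E`: a nonzero alternating map
`(Fin (n+1) → E) → {0,±1}` satisfying the Grassmann–Plücker relations over the
sign hyperfield. -/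
def IsChirotope (φ : (Fin (n + 1) → E) → ℝ) : Prop :=
  (∃ b, φ b ≠ 0) ∧
  (∀ b, φ b = 0 ∨ φ b = 1 ∨ φ b = -1) ∧
  (∀ (b : Fin (n + 1) → E) (σ : Equiv.Perm (Fin (n + 1))),
    φ (b ∘ σ) = ((Equiv.Perm.sign σ : ℤ) : ℝ) * φ b) ∧
  (∀ (b : Fin (n + 1) → E) (i j : Fin (n + 1)), i ≠ j → b i = b j → φ b = 0) ∧
  (∀ (x : Fin (n + 2) → E) (y : Fin n → E),
    (∀ k : Fin (n + 2), ((-1 : ℝ) ^ (k : ℕ)) * φ (x ∘ k.succAbove) * φ (Fin.cons (x k) y) = 0) ∨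
    (∃ k l : Fin (n + 2),
      0 < ((-1 : ℝ) ^ (k : ℕ)) * φ (x ∘ k.succAbove) * φ (Fin.cons (x k) y) ∧
      ((-1 : ℝ) ^ (l : ℕ)) * φ (x ∘ l.succAbove) * φ (Fin.cons (x l) y) < 0))

/-- Composition of signed sets. -/
def scomp (X Y : E → ℝ) : E → ℝ := fun e => if X e ≠ 0 then X e else Y e

/-- A cocircuit of the oriented matroid with chirotope `φ`. -/
def IsCocircuit (φ : (Fin (n + 1) → E) → ℝ) (X : E → ℝ) : Prop :=
  X ≠ 0 ∧ ∃ (ε : ℝ) (μ : Fin n → E), (ε = 1 ∨ ε = -1) ∧ ∀ e, X e = ε * φ (Fin.cons e μ)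

/-- Covectors: finite compositions of cocircuits (the empty composition is `0`). -/
inductive IsCovector (φ : (Fin (n + 1) → E) → ℝ) : (E → ℝ) → Prop
  | zero : IsCovector φ 0
  | cocirc (X : E → ℝ) : IsCocircuit φ X → IsCovector φ X
  | comp (X Y : E → ℝ) : IsCocircuit φ X → IsCovector φ Y → IsCovector φ (scomp X Y)

/-- The partial order on signed sets: `X ≤ Y` iff `Y` agrees with `X` on the
support of `X`. -/
def sle (X Y : E → ℝ) : Prop := ∀ e, X e ≠ 0 → Y e = X e

/-- A finite set is independent iff it is contained in (the range of) a basis. -/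
def Indep (φ : (Fin (n + 1) → E) → ℝ) (S : Finset E) : Prop :=
  ∃ b : Fin (n + 1) → E, φ b ≠ 0 ∧ (S : Set E) ⊆ Set.range b

/-- Flats of the underlying matroid: sets closed under the closure operator. -/
def IsFlat (φ : (Fin (n + 1) → E) → ℝ) (F : Set E) : Prop :=
  ∀ e : E, (∃ S : Finset E, (S : Set E) ⊆ F ∧ Indep φ S ∧ ¬ Indep φ (insert e S)) → e ∈ F

/-- The sign of a real number (as a real number). -/
def sgnR (x : ℝ) : ℝ := if 0 < x then 1 else if x < 0 then -1 else 0

/-- The chirotope of the universal realizable oriented matroid on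
`E = (ℝ^{n+1})^*`. -/
def phiUniv (n : ℕ) (b : Fin (n + 1) → Module.Dual ℝ (Fin (n + 1) → ℝ)) : ℝ :=
  sgnR ((Matrix.of fun i j => b i (Pi.single j 1)).det)

/-!
Every covector of `M_univ` is lexicographic: there are vectors `v₁, …, v_k` such that `X f` is
the sign of the first nonzero number among `f v₁, …, f v_k`. Indeed a cocircuit is
`f ↦ sign (f v)` for a vector `v ≠ 0` (the cofactors of the other `n` functionals), and composing
with it prepends `v`. This is the sign for the lexicographic order on `ℝᵏ`, so it is
multiplicative on tensor products and additive on summands whose signs are not opposite. If `X`,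
`Y` come from `U`, `W` and `a = X e = -Y e`, the vectors `a • (e u • w - e w • u)` for
`(w, u) ∈ W ×ˢ U` define a covector `Z` sending `f` to the lexicographic sign of
`a • (f|W ⊗ e|U - e|W ⊗ f|U)`. It vanishes at `e`, and the two tensors have signs `Y f` and
`X f`, so `Z f = (X ∘ Y) f` unless `X f = -Y f ≠ 0`.
-/

lemma sign_add_eq_of_sign_eq {α : Type*} [AddCommGroup α] [LinearOrder α] [IsOrderedAddMonoid α]
    {a b : α} (h : SignType.sign b = SignType.sign a) :
    SignType.sign (a + b) = SignType.sign a := by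
  rcases lt_trichotomy a 0 with ha | rfl | ha
  · rw [sign_neg ha, sign_eq_neg_one_iff] at h ⊢
    exact add_neg ha h
  · simpa using h
  · rw [sign_pos ha, sign_eq_one_iff] at h ⊢
    exact add_pos ha h

@[simp] lemma SignType.sign_coe {R : Type*} [Ring R] [LinearOrder R] [IsStrictOrderedRing R]
    (s : SignType) : SignType.sign (s : R) = s := by
  cases s <;> simp

@[simp] lemma SignType.coe_real_eq_zero {s : SignType} : (s : ℝ) = 0 ↔ s = 0 := by
  cases s <;> norm_num

@[simp] lemma SignType.coe_real_eq_neg {s t : SignType} : (s : ℝ) = -t ↔ s = -t := by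
  cases s <;> cases t <;>
    simp [SignType.zero_eq_zero, SignType.neg_eq_neg_one, SignType.pos_eq_one] <;> norm_num

lemma sgnR_eq_sign (x : ℝ) : sgnR x = SignType.sign x := by
  rcases lt_trichotomy x 0 with hx | rfl | hx
  · simp [sgnR, hx, hx.not_gt, sign_neg hx]
  · simp [sgnR]
  · simp [sgnR, hx, sign_pos hx]

section lexSign

variable {R : Type*} [CommRing R] [LinearOrder R] {ι κ : Type*}

def lexSign : List ι → (ι → R) → SignType
  | [], _ => 0
  | i :: l, g => if g i = 0 then lexSign l g else SignType.sign (g i)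

@[simp] lemma lexSign_nil (g : ι → R) : lexSign [] g = 0 := rfl

lemma lexSign_cons (i : ι) (l : List ι) (g : ι → R) :
    lexSign (i :: l) g = if g i = 0 then lexSign l g else SignType.sign (g i) := rfl

lemma lexSign_cons_of_eq_zero {i : ι} {g : ι → R} (h : g i = 0) (l : List ι) :
    lexSign (i :: l) g = lexSign l g := if_pos h

lemma lexSign_cons_of_ne_zero {i : ι} {g : ι → R} (h : g i ≠ 0) (l : List ι) :
    lexSign (i :: l) g = SignType.sign (g i) := if_neg h

lemma lexSign_eq_zero_iff {l : List ι} {g : ι → R} : lexSign l g = 0 ↔ ∀ i ∈ l, g i = 0 := by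
  induction l with
  | nil => simp
  | cons i l ih =>
    by_cases hi : g i = 0
    · simp [lexSign_cons_of_eq_zero hi, hi, ih]
    · simp [lexSign_cons_of_ne_zero hi, hi]

lemma lexSign_congr {l : List ι} {g h : ι → R} (hgh : ∀ i ∈ l, g i = h i) :
    lexSign l g = lexSign l h := by
  induction l with
  | nil => rfl
  | cons i l ih =>
    simp only [List.mem_cons, forall_eq_or_imp] at hgh
    rw [lexSign_cons, lexSign_cons, hgh.1, ih hgh.2]

lemma lexSign_append (l₁ l₂ : List ι) (g : ι → R) :
    lexSign (l₁ ++ l₂) g = if lexSign l₁ g = 0 then lexSign l₂ g else lexSign l₁ g := by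
  induction l₁ with
  | nil => simp
  | cons i l ih =>
    by_cases hi : g i = 0
    · rw [List.cons_append, lexSign_cons_of_eq_zero hi, lexSign_cons_of_eq_zero hi, ih]
    · rw [List.cons_append, lexSign_cons_of_ne_zero hi, lexSign_cons_of_ne_zero hi,
        if_neg (sign_ne_zero.2 hi)]

lemma lexSign_map (l : List κ) (φ : κ → ι) (g : ι → R) :
    lexSign (l.map φ) g = lexSign l (g ∘ φ) := by
  induction l with
  | nil => rfl
  | cons i l ih => simp only [List.map_cons, lexSign_cons, ih, Function.comp_apply]

variable [IsStrictOrderedRing R]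

lemma lexSign_const_mul (l : List ι) (c : R) (g : ι → R) :
    lexSign l (fun i => c * g i) = SignType.sign c * lexSign l g := by
  rcases eq_or_ne c 0 with rfl | hc
  · simp [lexSign_eq_zero_iff]
  induction l with
  | nil => simp
  | cons i l ih =>
    by_cases hi : g i = 0
    · rw [lexSign_cons_of_eq_zero hi, lexSign_cons_of_eq_zero (by simp [hi]), ih]
    · rw [lexSign_cons_of_ne_zero hi,
        lexSign_cons_of_ne_zero (g := fun i => c * g i) (mul_ne_zero hc hi), sign_mul]

lemma lexSign_product_mul (l₁ : List ι) (l₂ : List κ) (g : ι → R) (h : κ → R) :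
    lexSign (l₁ ×ˢ l₂) (fun p => g p.1 * h p.2) = lexSign l₁ g * lexSign l₂ h := by
  induction l₁ with
  | nil => simp
  | cons i l ih =>
    rw [List.product_cons, lexSign_append, lexSign_map, lexSign_cons]
    have hblock : lexSign l₂ ((fun p : ι × κ => g p.1 * h p.2) ∘ Prod.mk i) =
        SignType.sign (g i) * lexSign l₂ h := lexSign_const_mul l₂ (g i) h
    rw [hblock, ih]
    by_cases hi : g i = 0
    · simp [hi]
    · by_cases h₂ : lexSign l₂ h = 0 <;> simp [hi, h₂]

lemma lexSign_add_of_eq {l : List ι} {g h : ι → R} (hgh : lexSign l h = lexSign l g) :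
    lexSign l (g + h) = lexSign l g := by
  induction l with
  | nil => rfl
  | cons i l ih =>
    by_cases hg : g i = 0 <;> by_cases hh : h i = 0
    · rw [lexSign_cons_of_eq_zero hg, lexSign_cons_of_eq_zero hh] at hgh
      rw [lexSign_cons_of_eq_zero (by simp [hg, hh]), lexSign_cons_of_eq_zero hg, ih hgh]
    · rw [lexSign_cons_of_eq_zero hg, lexSign_cons_of_ne_zero hh] at hgh
      rw [lexSign_cons_of_ne_zero (g := g + h) (by simp [hg, hh]), lexSign_cons_of_eq_zero hg,
        Pi.add_apply, hg, zero_add, hgh]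
    · rw [lexSign_cons_of_eq_zero hh, lexSign_cons_of_ne_zero hg] at hgh
      rw [lexSign_cons_of_ne_zero (g := g + h) (by simp [hg, hh]), lexSign_cons_of_ne_zero hg,
        Pi.add_apply, hh, add_zero]
    · rw [lexSign_cons_of_ne_zero hg, lexSign_cons_of_ne_zero hh] at hgh
      have hsum : SignType.sign (g i + h i) = SignType.sign (g i) := sign_add_eq_of_sign_eq hgh
      have hsum_ne : (g + h) i ≠ 0 := by
        rw [Pi.add_apply, ← sign_ne_zero, hsum, sign_ne_zero]
        exact hg
      rw [lexSign_cons_of_ne_zero hg, lexSign_cons_of_ne_zero hsum_ne, Pi.add_apply, hsum]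

lemma lexSign_add {l : List ι} {g h : ι → R}
    (hopp : ¬(lexSign l g ≠ 0 ∧ lexSign l g = -lexSign l h)) :
    lexSign l (g + h) = if lexSign l g ≠ 0 then lexSign l g else lexSign l h := by
  by_cases hg : lexSign l g = 0
  · rw [if_neg (not_not.2 hg)]
    exact lexSign_congr fun i hi => by simp [lexSign_eq_zero_iff.1 hg i hi]
  rw [if_pos hg]
  by_cases hh : lexSign l h = 0
  · exact lexSign_congr fun i hi => by simp [lexSign_eq_zero_iff.1 hh i hi]
  have hsame : ∀ s t : SignType, s ≠ 0 → t ≠ 0 → ¬(s ≠ 0 ∧ s = -t) → t = s := by decide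
  exact lexSign_add_of_eq (hsame _ _ hg hh hopp)

theorem lexSign_product_elimination {U W : List ι} {e f : ι → R}
    (hUe : lexSign U e ≠ 0) (hWe : lexSign W e = -lexSign U e)
    (hsep : ¬(lexSign U f ≠ 0 ∧ lexSign U f = -lexSign W f)) :
    lexSign (W ×ˢ U) (fun p => (lexSign U e : R) * (e p.2 * f p.1 - e p.1 * f p.2)) =
      if lexSign U f ≠ 0 then lexSign U f else lexSign W f := by
  set a := lexSign U e
  have ha : a * a = 1 := by revert hUe; generalize a = a; decide +revert
  have hX : lexSign (W ×ˢ U) (fun p => (-a * e p.1) * f p.2) = lexSign U f := by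
    refine (lexSign_product_mul W U (fun w => -(a : R) * e w) f).trans ?_
    rw [lexSign_const_mul, Left.sign_neg, SignType.sign_coe, hWe, neg_mul_neg, ha, one_mul]
  have hY : lexSign (W ×ˢ U) (fun p => f p.1 * (a * e p.2)) = lexSign W f := by
    refine (lexSign_product_mul W U f (fun u => (a : R) * e u)).trans ?_
    rw [lexSign_const_mul, SignType.sign_coe, ha, mul_one]
  have hsplit : (fun p : ι × ι => (a : R) * (e p.2 * f p.1 - e p.1 * f p.2)) =
      (fun p => (-a * e p.1) * f p.2) + (fun p => f p.1 * (a * e p.2)) := by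
    funext p
    simp only [Pi.add_apply]
    ring
  rw [hsplit, lexSign_add (by rwa [hX, hY]), hX, hY]

end lexSign

section dualMatrix

variable {ι : Type*} [Fintype ι] [DecidableEq ι]

def dualMatrix (b : ι → Module.Dual ℝ (ι → ℝ)) : Matrix ι ι ℝ :=
  Matrix.of fun i j => b i (Pi.single j 1)

lemma dualMatrix_eq_toMatrix' (b : ι → Module.Dual ℝ (ι → ℝ)) :
    dualMatrix b = LinearMap.toMatrix' (LinearMap.pi b) := by
  ext i j
  simp [dualMatrix, LinearMap.toMatrix'_apply]

lemma dualMatrix_mul (b : ι → Module.Dual ℝ (ι → ℝ)) (T : Matrix ι ι ℝ) :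
    dualMatrix b * T = dualMatrix fun i => b i ∘ₗ Matrix.toLin' T := by
  rw [dualMatrix_eq_toMatrix', dualMatrix_eq_toMatrix', ← LinearMap.pi_comp,
    LinearMap.toMatrix'_comp, LinearMap.toMatrix'_toLin']

lemma det_one_updateRow (i : ι) (x : ι → ℝ) : ((1 : Matrix ι ι ℝ).updateRow i x).det = x i := by
  rw [← Matrix.cramer_transpose_apply, Matrix.transpose_one, Matrix.cramer_one]
  rfl

end dualMatrix

lemma phiUniv_eq (n : ℕ) (b : Fin (n + 1) → Module.Dual ℝ (Fin (n + 1) → ℝ)) :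
    phiUniv n b = SignType.sign (dualMatrix b).det :=
  sgnR_eq_sign _

lemma exists_eval_eq_det_dualMatrix_cons (μ : Fin n → Module.Dual ℝ (Fin (n + 1) → ℝ)) :
    ∃ w : Fin (n + 1) → ℝ, ∀ e : Module.Dual ℝ (Fin (n + 1) → ℝ),
      e w = (dualMatrix (Fin.cons e μ : Fin (n + 1) → _)).det := by
  set A := dualMatrix (Fin.cons 0 μ : Fin (n + 1) → _)
  have hA : ∀ e : Module.Dual ℝ (Fin (n + 1) → ℝ),
      dualMatrix (Fin.cons e μ : Fin (n + 1) → _) = A.updateRow 0 fun j => e (Pi.single j 1) := by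
    intro e
    ext i j
    cases i using Fin.cases <;> simp [A, dualMatrix]
  let detCons : Module.Dual ℝ (Module.Dual ℝ (Fin (n + 1) → ℝ)) :=
    { toFun := fun e => (A.updateRow 0 fun j => e (Pi.single j 1)).det
      map_add' := fun e e' => Matrix.det_updateRow_add A 0 _ _
      map_smul' := fun c e => Matrix.det_updateRow_smul A 0 c _ }
  exact ⟨(Module.evalEquiv ℝ _).symm detCons, fun e => by simp [hA, detCons]⟩

lemma det_dualMatrix_cons_proj_succAbove (p : Fin (n + 1)) (x : Module.Dual ℝ (Fin (n + 1) → ℝ)) :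
    (dualMatrix (Fin.cons x fun i => LinearMap.proj (p.succAbove i) : Fin (n + 1) → _)).det =
      (-1) ^ (p : ℕ) * x (Pi.single p 1) := by
  have hperm : dualMatrix (Fin.cons x fun i => LinearMap.proj (p.succAbove i) : Fin (n + 1) → _) =
      ((1 : Matrix _ _ ℝ).updateRow p fun j => x (Pi.single j 1)).submatrix
        (Fin.cycleRange p).symm id := by
    ext i j
    cases i using Fin.cases with
    | zero => simp [dualMatrix, Fin.cycleRange_symm_zero]
    | succ i =>
      simp [dualMatrix, Fin.cycleRange_symm_succ, Fin.succAbove_ne, Matrix.one_apply,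
        Pi.single_apply]
  rw [hperm, Matrix.det_permute, Equiv.Perm.sign_symm, Fin.sign_cycleRange, det_one_updateRow]
  push_cast
  ring

lemma isCocircuit_sign_eval {v : Fin (n + 1) → ℝ} (hv : v ≠ 0) :
    IsCocircuit (phiUniv n) fun f => (SignType.sign (f v) : ℝ) := by
  obtain ⟨p, hp⟩ : ∃ p, v p ≠ 0 := Function.ne_iff.1 hv
  set T : Matrix (Fin (n + 1)) (Fin (n + 1)) ℝ := (1 : Matrix _ _ ℝ).updateCol p v
  have hTdet : T.det = v p := by
    rw [← Matrix.cramer_apply, Matrix.cramer_one]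
    rfl
  have hT : ∀ j, Matrix.toLin' T (Pi.single j 1) = if j = p then v else Pi.single j 1 := by
    intro j
    ext k
    by_cases hj : j = p
    · subst hj
      simp [T]
    · simp [T, hj, Matrix.one_apply, Pi.single_apply, eq_comm]
  -- `μ i` is chosen so that `μ i ∘ T` is the coordinate `p.succAbove i`.
  let μ : Fin n → Module.Dual ℝ (Fin (n + 1) → ℝ) := fun i =>
    LinearMap.proj (p.succAbove i) - (v (p.succAbove i) / v p) • LinearMap.proj p
  have hμT : ∀ i, μ i ∘ₗ Matrix.toLin' T = LinearMap.proj (p.succAbove i) := by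
    intro i
    ext j
    by_cases hj : j = p
    · subst hj
      simp [μ, hT, Fin.succAbove_ne j i, hp]
    · simp [μ, hT, hj]
  have hdet : ∀ e : Module.Dual ℝ (Fin (n + 1) → ℝ),
      (dualMatrix (Fin.cons e μ : Fin (n + 1) → _)).det * v p = (-1) ^ (p : ℕ) * e v := by
    intro e
    have hcons : (fun i => (Fin.cons e μ : Fin (n + 1) → _) i ∘ₗ Matrix.toLin' T) =
        Fin.cons (e ∘ₗ Matrix.toLin' T) fun i => LinearMap.proj (p.succAbove i) := by
      funext i
      cases i using Fin.cases <;> simp [hμT]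
    have hTp : Matrix.toLin' T (Pi.single p 1) = v := by simpa using hT p
    rw [← hTdet, ← Matrix.det_mul, dualMatrix_mul, hcons, det_dualMatrix_cons_proj_succAbove,
      LinearMap.comp_apply, hTp]
  refine ⟨fun h => hp (by simpa using congrFun h (LinearMap.proj p)),
    SignType.sign ((-1) ^ (p : ℕ) * v p), μ, ?_, fun e => ?_⟩
  · have hε : SignType.sign ((-1) ^ (p : ℕ) * v p) ≠ 0 :=
      sign_ne_zero.2 (mul_ne_zero (pow_ne_zero _ (by norm_num)) hp)
    revert hε
    generalize SignType.sign ((-1 : ℝ) ^ (p : ℕ) * v p) = s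
    cases s <;> simp
  · have hsq : ((-1 : ℝ) ^ (p : ℕ)) ^ 2 = 1 := by rw [← pow_mul, pow_mul']; norm_num
    have hev : e v = (-1) ^ (p : ℕ) * v p * (dualMatrix (Fin.cons e μ : Fin (n + 1) → _)).det := by
      linear_combination -(-1) ^ (p : ℕ) * hdet e - e v * hsq
    show (SignType.sign (e v) : ℝ) = _
    rw [phiUniv_eq, hev, sign_mul, SignType.coe_mul]

lemma exists_eq_sign_eval_of_isCocircuit {X : Module.Dual ℝ (Fin (n + 1) → ℝ) → ℝ}
    (hX : IsCocircuit (phiUniv n) X) :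
    ∃ v : Fin (n + 1) → ℝ, X = fun f => (SignType.sign (f v) : ℝ) := by
  obtain ⟨-, ε, μ, hε, hXμ⟩ := hX
  obtain ⟨w, hw⟩ := exists_eval_eq_det_dualMatrix_cons μ
  refine ⟨ε • w, funext fun e => ?_⟩
  have hεsign : (SignType.sign ε : ℝ) = ε := by rcases hε with rfl | rfl <;> simp
  rw [hXμ, phiUniv_eq, ← hw, map_smul, smul_eq_mul, sign_mul, SignType.coe_mul, hεsign]

def lexCovector (L : List (Fin (n + 1) → ℝ)) : Module.Dual ℝ (Fin (n + 1) → ℝ) → ℝ :=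
  fun f => lexSign L f

lemma lexCovector_cons (v : Fin (n + 1) → ℝ) (L : List (Fin (n + 1) → ℝ)) :
    lexCovector (v :: L) = scomp (fun f => (SignType.sign (f v) : ℝ)) (lexCovector L) := by
  funext f
  by_cases hf : f v = 0
  · simp [lexCovector, scomp, lexSign_cons_of_eq_zero hf, hf]
  · simp [lexCovector, scomp, lexSign_cons_of_ne_zero hf, hf]

lemma isCovector_lexCovector (L : List (Fin (n + 1) → ℝ)) :
    IsCovector (phiUniv n) (lexCovector L) := by
  induction L with
  | nil => exact IsCovector.zero
  | cons v L ih =>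
    rcases eq_or_ne v 0 with rfl | hv
    · rwa [show lexCovector (0 :: L) = lexCovector L from
        funext fun f => congrArg _ (lexSign_cons_of_eq_zero (map_zero f) L)]
    · rw [lexCovector_cons]
      exact IsCovector.comp _ _ (isCocircuit_sign_eval hv) ih

lemma exists_lexCovector_of_isCovector {X : Module.Dual ℝ (Fin (n + 1) → ℝ) → ℝ}
    (hX : IsCovector (phiUniv n) X) : ∃ L, X = lexCovector L := by
  induction hX with
  | zero => exact ⟨[], rfl⟩
  | cocirc X hX =>
    obtain ⟨v, rfl⟩ := exists_eq_sign_eval_of_isCocircuit hX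
    refine ⟨[v], funext fun f => ?_⟩
    by_cases hf : f v = 0 <;> simp [lexCovector, lexSign_cons, hf]
  | comp X Y hX _ ih =>
    obtain ⟨v, rfl⟩ := exists_eq_sign_eval_of_isCocircuit hX
    obtain ⟨L, rfl⟩ := ih
    exact ⟨v :: L, (lexCovector_cons v L).symm⟩

theorem isCovector_phiUniv_iff {X : Module.Dual ℝ (Fin (n + 1) → ℝ) → ℝ} :
    IsCovector (phiUniv n) X ↔ ∃ L, X = lexCovector L := by
  refine ⟨exists_lexCovector_of_isCovector, ?_⟩
  rintro ⟨L, rfl⟩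
  exact isCovector_lexCovector L

/-- Covector elimination holds for the covectors of the universal realizable
oriented matroid `M_univ` on `(ℝ^{n+1})^*`. -/
theorem covector_elimination_Muniv (n : ℕ)
    (X Y : Module.Dual ℝ (Fin (n + 1) → ℝ) → ℝ)
    (hX : IsCovector (phiUniv n) X) (hY : IsCovector (phiUniv n) Y)
    (e : Module.Dual ℝ (Fin (n + 1) → ℝ)) (he0 : X e ≠ 0) (he : X e = -Y e) :
    ∃ Z : Module.Dual ℝ (Fin (n + 1) → ℝ) → ℝ, IsCovector (phiUniv n) Z ∧ Z e = 0 ∧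
      ∀ e', ¬(X e' ≠ 0 ∧ X e' = -Y e') → Z e' = scomp X Y e' := by
  obtain ⟨U, rfl⟩ := isCovector_phiUniv_iff.1 hX
  obtain ⟨W, rfl⟩ := isCovector_phiUniv_iff.1 hY
  have hUe : lexSign U e ≠ 0 := by simpa [lexCovector] using he0
  have hWe : lexSign W e = -lexSign U e := by rw [SignType.coe_real_eq_neg.1 he, neg_neg]
  let z : (Fin (n + 1) → ℝ) × (Fin (n + 1) → ℝ) → Fin (n + 1) → ℝ := fun p =>
    (lexSign U e : ℝ) • (e p.2 • p.1 - e p.1 • p.2)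
  have hz : ∀ f : Module.Dual ℝ (Fin (n + 1) → ℝ),
      f ∘ z = fun p => (lexSign U e : ℝ) * (e p.2 * f p.1 - e p.1 * f p.2) := by
    intro f
    funext p
    simp [z]
  refine ⟨lexCovector ((W ×ˢ U).map z), isCovector_lexCovector _, ?_, fun f hsep => ?_⟩
  · simp [lexCovector, lexSign_map, hz, lexSign_eq_zero_iff, mul_comm]
  · rw [lexCovector, lexSign_map, hz,
      lexSign_product_elimination hUe hWe (by simpa [lexCovector] using hsep)]
    simp only [scomp, lexCovector, ne_eq, SignType.coe_real_eq_zero]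
    split_ifs <;> rfl
end
end
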